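/- For every real n ≥ 6: sin(π/n)·sin(5π/n) < sin(2π/n)² if 6 ≤ n < 12, sin(π/n)·sin(5π/n) = sin(2π/n)² if n = 12, and sin(π/n)·sin(5π/n) > sin(2π/n)² if n > 12; equivalently, D^(n)((1,4)) is less than, equal to, or greater than D^(n)((2,2)) according as n < 12, n = 12, or n > 12. Moreover the ratio D^(n)((1,4))/D^(n)((2,2)) is a strictly increasing function of the real variable n on [6,∞). -/

import Mathlib

/-!
Put `x = π / n`. The multiple-angle formulas give
`sin x * sin 5x - sin² 2x = sin² x * (2 cos 4x - 1)` and, after cancelling `sin 4x = 2 sin 2x cos 2x`,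
`D((1,4)) - D((2,2)) = 2 cos 2x * (2 cos 4x - 1)`; both signs are those of `cos (4π/n) - cos (π/3)`,
which changes exactly at `n = 12`. The ratio is `sin x * sin 5x / sin² 2x = 2u - 1 + 1 / (2 (1 + u))`
with `u = cos (2π/n)`: an increasing function of `u > -1/2`, and `u` increases with `n`.
-/

noncomputable section

/-- The SU(3) quantum dimension `D⁽ⁿ⁾((a,b))` for a real height `n`. -/
def qdimR (n a b : ℝ) : ℝ :=
  (Real.sin (Real.pi * a / n) * Real.sin (Real.pi * b / n) *
      Real.sin (Real.pi * (a + b) / n)) /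
    (Real.sin (Real.pi / n) ^ 2 * Real.sin (2 * Real.pi / n))

open Real

namespace Real

theorem sin_five_mul (x : ℝ) :
    sin (5 * x) = sin x * (16 * cos x ^ 4 - 12 * cos x ^ 2 + 1) := by
  have h4 : sin (4 * x) = 2 * sin (2 * x) * cos (2 * x) := by
    rw [← sin_two_mul]; ring_nf
  have h4' : cos (4 * x) = 2 * cos (2 * x) ^ 2 - 1 := by
    rw [← cos_two_mul]; ring_nf
  rw [show 5 * x = x + 4 * x by ring, sin_add, h4, h4', sin_two_mul, cos_two_mul]
  ring

theorem sin_mul_sin_five_mul_sub_sin_two_mul_sq (x : ℝ) :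
    sin x * sin (5 * x) - sin (2 * x) ^ 2 = sin x ^ 2 * (2 * cos (4 * x) - 1) := by
  rw [sin_five_mul, show 4 * x = 2 * (2 * x) by ring, cos_two_mul, cos_two_mul, sin_two_mul]
  ring

theorem sin_mul_sin_five_mul_div_sin_two_mul_sq {x : ℝ} (h : sin (2 * x) ≠ 0) :
    sin x * sin (5 * x) / sin (2 * x) ^ 2 =
      2 * cos (2 * x) - 1 + 1 / (2 * (1 + cos (2 * x))) := by
  rw [sin_two_mul, mul_ne_zero_iff, mul_ne_zero_iff] at h
  obtain ⟨⟨-, hs⟩, hc⟩ := h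
  rw [sin_five_mul, sin_two_mul, cos_two_mul]
  field_simp
  ring

theorem sin_ne_zero_of_sin_two_mul_ne_zero {x : ℝ} (h : sin (2 * x) ≠ 0) : sin x ≠ 0 :=
  fun hs => h (by rw [sin_two_mul, hs]; ring)

theorem sin_two_mul_pi_div_pos {n : ℝ} (hn : 2 < n) : 0 < sin (2 * (π / n)) := by
  have hn0 : 0 < n := by linarith
  refine sin_pos_of_pos_of_lt_pi (by positivity) ?_
  rw [mul_div_left_comm]
  exact mul_lt_of_lt_one_right pi_pos ((div_lt_one hn0).2 hn)

theorem strictMonoOn_cos_mul_pi_div {k : ℝ} (hk : 0 < k) :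
    StrictMonoOn (fun n => cos (k * (π / n))) (Set.Ici k) := by
  intro a ha b hb hab
  have ha0 : 0 < a := hk.trans_le ha
  have hb0 : 0 < b := hk.trans_le hb
  refine strictAntiOn_cos ⟨by positivity, ?_⟩ ⟨by positivity, ?_⟩ ?_
  · rw [mul_div_left_comm]; exact mul_le_of_le_one_right pi_pos.le ((div_le_one hb0).2 hb)
  · rw [mul_div_left_comm]; exact mul_le_of_le_one_right pi_pos.le ((div_le_one ha0).2 ha)
  · gcongr

theorem half_le_cos_two_mul_pi_div {n : ℝ} (hn : 6 ≤ n) : 1 / 2 ≤ cos (2 * (π / n)) := by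
  rw [← cos_pi_div_three, show π / 3 = 2 * (π / 6) by ring]
  exact (strictMonoOn_cos_mul_pi_div two_pos).monotoneOn (by norm_num)
    (Set.mem_Ici.2 (by linarith)) hn

theorem cos_four_mul_pi_div_twelve : cos (4 * (π / 12)) = 1 / 2 := by
  rw [← cos_pi_div_three]; ring_nf

theorem cos_four_mul_pi_div_lt_half {n : ℝ} (h4 : 4 ≤ n) (h : n < 12) :
    cos (4 * (π / n)) < 1 / 2 :=
  cos_four_mul_pi_div_twelve ▸
    strictMonoOn_cos_mul_pi_div four_pos h4 (Set.mem_Ici.2 (by norm_num)) h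

theorem half_lt_cos_four_mul_pi_div {n : ℝ} (h : 12 < n) : 1 / 2 < cos (4 * (π / n)) :=
  cos_four_mul_pi_div_twelve ▸
    strictMonoOn_cos_mul_pi_div four_pos (Set.mem_Ici.2 (by norm_num))
      (Set.mem_Ici.2 (by linarith)) h

end Real

theorem strictMonoOn_two_mul_sub_one_add_one_div :
    StrictMonoOn (fun u : ℝ => 2 * u - 1 + 1 / (2 * (1 + u))) (Set.Ioi (-1 / 2)) := by
  intro a ha b hb hab
  simp only [Set.mem_Ioi] at ha hb
  have ha1 : 0 < 1 + a := by linarith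
  have hb1 : 0 < 1 + b := by linarith
  have key : 1 / (2 * (1 + a)) - 1 / (2 * (1 + b)) < 2 * (b - a) := by
    rw [div_sub_div _ _ (by positivity) (by positivity), div_lt_iff₀ (by positivity)]
    nlinarith [mul_pos (sub_pos.2 hab) (show 0 < 4 * (1 + a) * (1 + b) - 1 by nlinarith)]
  simp only
  linarith

theorem qdimR_eq (n a b : ℝ) :
    qdimR n a b = sin (a * (π / n)) * sin (b * (π / n)) * sin ((a + b) * (π / n)) /
      (sin (π / n) ^ 2 * sin (2 * (π / n))) := by
  simp only [qdimR, mul_div_assoc, mul_div_left_comm π]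

theorem qdimR_one_four {n : ℝ} (h : sin (2 * (π / n)) ≠ 0) :
    qdimR n 1 4 =
      2 * cos (2 * (π / n)) / sin (π / n) ^ 2 * (sin (π / n) * sin (5 * (π / n))) := by
  rw [qdimR_eq, one_mul, show (1 : ℝ) + 4 = 5 by norm_num,
    show (4 : ℝ) * (π / n) = 2 * (2 * (π / n)) by ring, sin_two_mul (2 * _)]
  generalize π / n = x at h ⊢
  field_simp

theorem qdimR_two_two (n : ℝ) :
    qdimR n 2 2 = 2 * cos (2 * (π / n)) / sin (π / n) ^ 2 * sin (2 * (π / n)) ^ 2 := by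
  rw [qdimR_eq, show ((2 : ℝ) + 2) * (π / n) = 2 * (2 * (π / n)) by ring, sin_two_mul (2 * _)]
  field_simp

theorem qdimR_one_four_sub_qdimR_two_two {n : ℝ} (h : sin (2 * (π / n)) ≠ 0) :
    qdimR n 1 4 - qdimR n 2 2 = 2 * cos (2 * (π / n)) * (2 * cos (4 * (π / n)) - 1) := by
  have hs := sin_ne_zero_of_sin_two_mul_ne_zero h
  rw [qdimR_one_four h, qdimR_two_two, ← mul_sub, sin_mul_sin_five_mul_sub_sin_two_mul_sq]
  field_simp

theorem qdimR_one_four_div_qdimR_two_two {n : ℝ} (h : sin (2 * (π / n)) ≠ 0)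
    (hc : cos (2 * (π / n)) ≠ 0) :
    qdimR n 1 4 / qdimR n 2 2 =
      2 * cos (2 * (π / n)) - 1 + 1 / (2 * (1 + cos (2 * (π / n)))) := by
  have hs := sin_ne_zero_of_sin_two_mul_ne_zero h
  rw [qdimR_one_four h, qdimR_two_two, mul_div_mul_left _ _ (by positivity),
    sin_mul_sin_five_mul_div_sin_two_mul_sq h]

theorem statement18 :
    (∀ n : ℝ, 6 ≤ n →
      ((n < 12 → Real.sin (Real.pi / n) * Real.sin (5 * Real.pi / n) <
          Real.sin (2 * Real.pi / n) ^ 2 ∧ qdimR n 1 4 < qdimR n 2 2) ∧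
       (n = 12 → Real.sin (Real.pi / n) * Real.sin (5 * Real.pi / n) =
          Real.sin (2 * Real.pi / n) ^ 2 ∧ qdimR n 1 4 = qdimR n 2 2) ∧
       (12 < n → Real.sin (Real.pi / n) * Real.sin (5 * Real.pi / n) >
          Real.sin (2 * Real.pi / n) ^ 2 ∧ qdimR n 1 4 > qdimR n 2 2))) ∧
    StrictMonoOn (fun n : ℝ => qdimR n 1 4 / qdimR n 2 2) (Set.Ici 6) := by
  simp only [mul_div_assoc, gt_iff_lt]
  have hsin2 {n : ℝ} (hn : 6 ≤ n) : sin (2 * (π / n)) ≠ 0 :=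
    (sin_two_mul_pi_div_pos (by linarith)).ne'
  refine ⟨fun n hn => ?_, ?_⟩
  · have hs : 0 < sin (π / n) ^ 2 := by
      have := sin_ne_zero_of_sin_two_mul_ne_zero (hsin2 hn)
      positivity
    have hc := half_le_cos_two_mul_pi_div hn
    have hsin := sin_mul_sin_five_mul_sub_sin_two_mul_sq (π / n)
    have hq := qdimR_one_four_sub_qdimR_two_two (hsin2 hn)
    refine ⟨fun h => ?_, fun h => ?_, fun h => ?_⟩
    · have hd := cos_four_mul_pi_div_lt_half (by linarith) h
      exact ⟨by nlinarith, by nlinarith⟩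
    · subst h
      rw [cos_four_mul_pi_div_twelve] at hsin hq
      exact ⟨by linarith, by linarith⟩
    · have hd := half_lt_cos_four_mul_pi_div h
      exact ⟨by nlinarith, by nlinarith⟩
  · refine (strictMonoOn_two_mul_sub_one_add_one_div.comp
      ((strictMonoOn_cos_mul_pi_div two_pos).mono (Set.Ici_subset_Ici.2 (by norm_num)))
      fun n hn => ?_).congr fun n hn => ?_
    · exact Set.mem_Ioi.2 (by linarith [half_le_cos_two_mul_pi_div hn])
    · have hc := half_le_cos_two_mul_pi_div hn
      exact (qdimR_one_four_div_qdimR_two_two (hsin2 hn) (by positivity)).symm
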